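/- arXiv:2203.08193 — 13 statements merged into one kernel-verified Lean document; each statement's English description precedes it below -/
import Mathlib

section
/- Let X be a finite nonempty set with exactly k elements, and let Φ₁, …, Φ_r be equivalence relations (setoids) on X. Then there exists a subset T of {1, …, r} with |T| < k such that the infimum (common refinement) of all the Φ_t for t ∈ {1,…,r} equals the infimum of the Φ_t for t ∈ T. -/
/-!
Add the setoids `Φ t` greedily to a running common refinement, keeping `Φ t` only when it
strictly refines the current infimum. Each kept setoid strictly increases the number of
classes, which starts at `1` (nonempty `X`) and never exceeds `k`; so fewer than `k`
setoids are kept.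
-/

namespace Setoid

variable {X : Type*}

theorem card_quotient_le_card [Finite X] (s : Setoid X) : Nat.card (Quotient s) ≤ Nat.card X :=
  Nat.card_le_card_of_surjective _ Quotient.mk_surjective

theorem card_quotient_lt_of_lt [Finite X] {s t : Setoid X} (h : s < t) :
    Nat.card (Quotient t) < Nat.card (Quotient s) := by
  have hsurj : Function.Surjective (map_of_le h.le) :=
    Quotient.ind fun a => ⟨⟦a⟧, rfl⟩
  refine lt_of_le_of_ne (Nat.card_le_card_of_surjective _ hsurj) fun hcard => h.not_ge ?_
  intro a b hab
  exact Quotient.exact ((hsurj.bijective_of_nat_card_le hcard.ge).1 (Quotient.sound hab))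

theorem exists_card_lt_card_quotient_biInf_eq [Finite X] [Nonempty X] {ι : Type*}
    (Φ : ι → Setoid X) (S : Finset ι) :
    ∃ T : Finset ι, T.card < Nat.card (Quotient (⨅ t ∈ T, Φ t)) ∧
      ⨅ t ∈ T, Φ t = ⨅ t ∈ S, Φ t := by
  classical
  induction S using Finset.induction_on with
  | empty =>
    have : Nonempty (Quotient (⨅ t ∈ (∅ : Finset ι), Φ t)) := .map Quotient.mk'' ‹_›
    exact ⟨∅, Nat.card_pos, rfl⟩
  | insert a S _ ih =>
    obtain ⟨T, hcard, hT⟩ := ih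
    rw [Finset.iInf_insert, ← hT]
    by_cases hle : ⨅ t ∈ T, Φ t ≤ Φ a
    · exact ⟨T, hcard, (inf_eq_right.mpr hle).symm⟩
    · have haT : a ∉ T := fun ha => hle (iInf₂_le a ha)
      have hlt : Φ a ⊓ ⨅ t ∈ T, Φ t < ⨅ t ∈ T, Φ t :=
        inf_le_right.lt_of_ne fun h => hle (h ▸ inf_le_left)
      refine ⟨insert a T, ?_, Finset.iInf_insert a T Φ⟩
      rw [Finset.card_insert_of_notMem haT, Finset.iInf_insert]
      exact (Nat.succ_le_of_lt hcard).trans_lt (card_quotient_lt_of_lt hlt)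

end Setoid

/-- Let `X` be a finite nonempty set with exactly `k` elements, and let
`Φ₁, …, Φ_r` be setoids on `X`. Then there exists `T ⊆ {1,…,r}` with `|T| < k` such that
the infimum (common refinement) of all the `Φ t` equals the infimum over `t ∈ T`. -/
theorem stmt0 {X : Type*} [Fintype X] [Nonempty X] (k : ℕ) (hk : Fintype.card X = k)
    (r : ℕ) (Φ : Fin r → Setoid X) :
    ∃ T : Finset (Fin r), T.card < k ∧ (⨅ t, Φ t) = ⨅ t ∈ T, Φ t := by
  obtain ⟨T, hcard, hT⟩ := Setoid.exists_card_lt_card_quotient_biInf_eq Φ Finset.univ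
  refine ⟨T, ?_, by simpa using hT.symm⟩
  calc T.card < Nat.card (Quotient (⨅ t ∈ T, Φ t)) := hcard
    _ ≤ Nat.card X := Setoid.card_quotient_le_card _
    _ = k := by rw [Nat.card_eq_fintype_card, hk]
end

section
/- Let X be a finite set and s a setoid on X with exactly z equivalence classes, and let d be a natural number with d < z. Then the number of setoids t on X that are coarser than s (i.e., s ≤ t in the refinement order) and have exactly z − d equivalence classes is at most z^(2d). -/
/-!
Partitions of `X` coarser than `s` are the partitions of the `z` classes of `s`. Fix a
representative in each class of a partition of a `z`-element set into `z - d` parts; the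
partition is recovered from the `d` pairs `(a, rep a)` with `a` not a representative, so there
are at most `(z²).choose d ≤ z ^ (2 * d)` such partitions.
-/

open Function Finset

namespace Function

variable {α : Type*} [Fintype α] [DecidableEq α]

def nonfixedGraph (f : α → α) : Finset (α × α) :=
  ({a | f a ≠ a} : Finset α).image fun a => (a, f a)

theorem mem_nonfixedGraph {f : α → α} {a b : α} :
    (a, b) ∈ nonfixedGraph f ↔ f a ≠ a ∧ f a = b := by
  simp [nonfixedGraph]

theorem nonfixedGraph_injective : Injective (nonfixedGraph : (α → α) → Finset (α × α)) := by
  intro f g h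
  funext c
  have key : ∀ b, (f c ≠ c ∧ f c = b) ↔ (g c ≠ c ∧ g c = b) := fun b => by
    rw [← mem_nonfixedGraph, ← mem_nonfixedGraph, h]
  by_cases hf : f c = c
  · by_cases hg : g c = c
    · rw [hf, hg]
    · exact ((key (g c)).2 ⟨hg, rfl⟩).2
  · exact ((key (f c)).1 ⟨hf, rfl⟩).2.symm

theorem card_nonfixedGraph (f : α → α) :
    #(nonfixedGraph f) = Fintype.card α - Nat.card (fixedPoints f) := by
  rw [nonfixedGraph, card_image_of_injective _ fun a b h => congrArg Prod.fst h,
    ← Fintype.card_subtype, Fintype.card_subtype_compl, Nat.card_eq_fintype_card]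
  rfl

end Function

namespace Setoid

variable {α β : Type*}

noncomputable def rep (r : Setoid α) : α → α := Quotient.out ∘ Quotient.mk r

theorem rep_eq_rep_iff (r : Setoid α) {a b : α} : r.rep a = r.rep b ↔ r a b :=
  Quotient.out_inj.trans Quotient.eq

theorem rep_injective : Injective (rep : Setoid α → α → α) := fun r r' h =>
  Setoid.ext fun a b => by rw [← rep_eq_rep_iff, ← rep_eq_rep_iff, h]

theorem range_rep (r : Setoid α) : Set.range r.rep = fixedPoints r.rep := by
  ext a
  refine ⟨?_, fun h => ⟨a, h⟩⟩
  rintro ⟨b, rfl⟩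
  simp [IsFixedPt, rep]

theorem card_fixedPoints_rep (r : Setoid α) :
    Nat.card (fixedPoints r.rep) = Nat.card (Quotient r) := by
  rw [← range_rep, rep, Quotient.mk_surjective.range_comp,
    Nat.card_range_of_injective Quotient.out_injective]

theorem card_quotient_comap_of_surjective {f : α → β} (hf : Surjective f) (r : Setoid β) :
    Nat.card (Quotient (r.comap f)) = Nat.card (Quotient r) := by
  rw [Nat.card_congr (comapQuotientEquiv f r), (Quotient.mk''_surjective.comp hf).range_eq,
    Nat.card_univ]

theorem card_setoid_with_card_quotient_le [Finite α] (k : ℕ) :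
    Nat.card {r : Setoid α // Nat.card (Quotient r) = k} ≤
      Nat.card α ^ (2 * (Nat.card α - k)) := by
  classical
  have := Fintype.ofFinite α
  let encode (r : {r : Setoid α // Nat.card (Quotient r) = k}) :
      {S : Finset (α × α) // #S = Fintype.card α - k} :=
    ⟨nonfixedGraph r.1.rep, by rw [card_nonfixedGraph, card_fixedPoints_rep, r.2]⟩
  have hencode : Injective encode := fun r r' h =>
    Subtype.ext (rep_injective (nonfixedGraph_injective (congrArg Subtype.val h)))
  calc Nat.card {r : Setoid α // Nat.card (Quotient r) = k}
      ≤ Nat.card {S : Finset (α × α) // #S = Fintype.card α - k} :=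
        Nat.card_le_card_of_injective encode hencode
    _ = (Fintype.card α ^ 2).choose (Fintype.card α - k) := by
        rw [Nat.card_eq_fintype_card, Fintype.card_finset_len, Fintype.card_prod, sq]
    _ ≤ Nat.card α ^ (2 * (Nat.card α - k)) := by
        rw [Nat.card_eq_fintype_card, pow_mul]
        exact Nat.choose_le_pow _ _

theorem card_setoid_ge_with_card_quotient_eq (s : Setoid α) (k : ℕ) :
    Nat.card {t : Setoid α // s ≤ t ∧ Nat.card (Quotient t) = k} =
      Nat.card {u : Setoid (Quotient s) // Nat.card (Quotient u) = k} := by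
  refine (Nat.card_congr <| (s.correspondence.symm.toEquiv.subtypeEquiv fun u => ?_).trans
    (Equiv.subtypeSubtypeEquivSubtypeInter _ _)).symm
  change _ ↔ Nat.card (Quotient (u.comap Quotient.mk')) = k
  rw [card_quotient_comap_of_surjective Quotient.mk'_surjective]

end Setoid

/-- Let `X` be a finite set and `s` a setoid on `X` with exactly `z`
equivalence classes, and `d < z`. Then the number of setoids `t` on `X` coarser than `s`
(i.e. `s ≤ t`) with exactly `z - d` equivalence classes is at most `z ^ (2 * d)`. -/
theorem stmt1 {X : Type*} [Finite X] (s : Setoid X) (z d : ℕ)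
    (hz : Nat.card (Quotient s) = z) (hd : d < z) :
    Nat.card {t : Setoid X // s ≤ t ∧ Nat.card (Quotient t) = z - d} ≤ z ^ (2 * d) := by
  have h := Setoid.card_setoid_with_card_quotient_le (α := Quotient s) (z - d)
  rwa [← Setoid.card_setoid_ge_with_card_quotient_eq, hz, Nat.sub_sub_self hd.le] at h
end

section
/- Let (G, ℓ) be a ZMod 2-labeled graph. If for some vertex v there exists a closed walk w : G.Walk v v whose label sum equals 1, then there exist a vertex u and a closed walk c : G.Walk u u such that c is a cycle and the label sum of c equals 1. -/
/-!
Reduce an arbitrary walk to a path step by step, prepending one edge at a time. When the new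
first vertex `u` already lies on the current path, the path splits at `u` into a closed walk
through the new edge and a shorter path. The closed walk is a cycle unless it just goes back and
forth along that edge, in which case its label sum is `2 ℓ e = 0`. So either every closed walk
created along the way has label sum `0`, and the final path (trivial, for a closed walk) carries
the label sum of the walk, or one of them is a cycle with nonzero label sum.
-/

open SimpleGraph

namespace SimpleGraph.Walk

variable {V M : Type*} [AddCommMonoid M] {G : SimpleGraph V} (ℓ : Sym2 V → M)

def labelSum {u v : V} (p : G.Walk u v) : M := (p.edges.map ℓ).sum

@[simp]
lemma labelSum_nil {u : V} : (nil : G.Walk u u).labelSum ℓ = 0 := rfl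

@[simp]
lemma labelSum_cons {u v w : V} (h : G.Adj u v) (p : G.Walk v w) :
    (cons h p).labelSum ℓ = ℓ s(u, v) + p.labelSum ℓ := by
  simp [labelSum]

@[simp]
lemma labelSum_append {u v w : V} (p : G.Walk u v) (q : G.Walk v w) :
    (p.append q).labelSum ℓ = p.labelSum ℓ + q.labelSum ℓ := by
  simp [labelSum]

lemma IsPath.isCycle_cons_or_labelSum_cons_eq {u v : V} {p : G.Walk v u} (hp : p.IsPath)
    (h : G.Adj u v) :
    (cons h p).IsCycle ∨ (cons h p).labelSum ℓ = ℓ s(u, v) + ℓ s(u, v) := by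
  by_cases he : s(u, v) ∈ p.edges
  · right
    rw [Sym2.eq_swap] at he
    rw [hp.eq_adj_toWalk_of_mem_edges he]
    simp [Sym2.eq_swap]
  · exact .inl ((cons_isCycle_iff p h).2 ⟨hp, he⟩)

theorem exists_isPath_labelSum_eq_or_exists_isCycle (hℓ : ∀ e, ℓ e + ℓ e = 0) {u v : V}
    (p : G.Walk u v) :
    (∃ q : G.Walk u v, q.IsPath ∧ q.labelSum ℓ = p.labelSum ℓ) ∨
      ∃ (x : V) (c : G.Walk x x), c.IsCycle ∧ c.labelSum ℓ ≠ 0 := by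
  classical
  induction p with
  | nil => exact .inl ⟨nil, .nil, rfl⟩
  | @cons u w v h p ih =>
    obtain ⟨q, hq, hsum⟩ | hcycle := ih
    swap
    · exact .inr hcycle
    by_cases hu : u ∈ q.support
    swap
    · exact .inl ⟨cons h q, hq.cons hu, by simp [hsum]⟩
    have hsplit : (cons h p).labelSum ℓ =
        (cons h (q.takeUntil u hu)).labelSum ℓ + (q.dropUntil u hu).labelSum ℓ := by
      conv_lhs => rw [labelSum_cons, ← hsum, ← q.take_spec hu, labelSum_append]
      rw [labelSum_cons, add_assoc]
    by_cases hzero : (cons h (q.takeUntil u hu)).labelSum ℓ = 0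
    · exact .inl ⟨q.dropUntil u hu, hq.dropUntil hu, by rw [hsplit, hzero, zero_add]⟩
    · refine .inr ⟨u, _, ?_, hzero⟩
      refine ((hq.takeUntil hu).isCycle_cons_or_labelSum_cons_eq ℓ h).resolve_right ?_
      rwa [hℓ]

end SimpleGraph.Walk

/-- In a `ZMod 2`-labeled graph, if some closed walk has label sum `1`,
then there is a cycle with label sum `1`. -/
theorem stmt2 {V : Type*} (G : SimpleGraph V) (ℓ : Sym2 V → ZMod 2) (v : V)
    (w : G.Walk v v) (hw : (w.edges.map ℓ).sum = 1) :
    ∃ (u : V) (c : G.Walk u u), c.IsCycle ∧ (c.edges.map ℓ).sum = 1 := by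
  obtain ⟨q, hq, hsum⟩ | ⟨u, c, hc, hsum⟩ :=
    w.exists_isPath_labelSum_eq_or_exists_isCycle ℓ fun e ↦ CharTwo.add_self_eq_zero (ℓ e)
  · rw [(Walk.isPath_iff_nil.1 hq).eq_nil, Walk.labelSum_nil] at hsum
    exact absurd (hsum.trans hw) zero_ne_one
  · exact ⟨u, c, hc, (by decide : ∀ x : ZMod 2, x ≠ 0 → x = 1) _ hsum⟩
end

section
/- Let (G, ℓ) be a ZMod 2-labeled graph on a finite vertex type, with G connected, and let T be a spanning tree of G. If G contains an odd-labeled cycle, then G contains an odd-labeled cycle exactly one of whose edges is not an edge of T. -/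
/-!
Root the tree `T` at some vertex `r` and let `φ v` be the label sum of the tree path from `r`
to `v`. Switching the labels by `φ`, i.e. replacing `ℓ s(x, y)` by `ℓ s(x, y) + φ x + φ y`,
does not change the label sum of any closed walk, and it makes every tree edge even. Hence an
odd cycle contains an edge `s(a, b)` that is odd after switching, necessarily a non-tree edge,
and the fundamental cycle of `s(a, b)` with respect to `T` is odd after switching, hence odd.
-/

open SimpleGraph

namespace SimpleGraph

variable {V : Type*} {G T : SimpleGraph V}

def edgeCoboundary (φ : V → ZMod 2) : Sym2 V → ZMod 2 :=
  Sym2.lift ⟨fun x y => φ x + φ y, fun _ _ => add_comm _ _⟩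

@[simp]
lemma edgeCoboundary_mk (φ : V → ZMod 2) (x y : V) : edgeCoboundary φ s(x, y) = φ x + φ y :=
  rfl

lemma Walk.sum_map_edgeCoboundary (φ : V → ZMod 2) {u v : V} (w : G.Walk u v) :
    (w.edges.map (edgeCoboundary φ)).sum = φ u + φ v := by
  induction w with
  | nil => exact (CharTwo.add_self_eq_zero _).symm
  | @cons _ v _ _ _ ih =>
    simp only [Walk.edges_cons, List.map_cons, List.sum_cons, ih, edgeCoboundary_mk]
    linear_combination CharTwo.add_self_eq_zero (φ v)

lemma Walk.sum_map_add_edgeCoboundary_of_closed (ℓ : Sym2 V → ZMod 2) (φ : V → ZMod 2)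
    {u : V} (w : G.Walk u u) :
    (w.edges.map fun e => ℓ e + edgeCoboundary φ e).sum = (w.edges.map ℓ).sum := by
  rw [List.sum_map_add, w.sum_map_edgeCoboundary, CharTwo.add_self_eq_zero, add_zero]

/-- Of the two paths from `r` to the ends of a tree edge, one extends the other by that edge. -/
lemma IsAcyclic.eq_edgeCoboundary_of_mem_edgeSet (hT : T.IsAcyclic) (ℓ : Sym2 V → ZMod 2)
    {r : V} {p : ∀ v, T.Walk r v} (hp : ∀ v, (p v).IsPath) {e : Sym2 V} (he : e ∈ T.edgeSet) :
    ℓ e = edgeCoboundary (fun v => ((p v).edges.map ℓ).sum) e := by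
  induction e using Sym2.ind with
  | _ a b =>
  have hab : T.Adj a b := he
  rw [edgeCoboundary_mk]
  by_cases ha : a ∈ (p b).support
  · rw [hT.path_concat (hp a) (hp b) hab ha]
    simp only [Walk.edges_concat, List.concat_eq_append, List.map_append, List.sum_append,
      List.map_singleton, List.sum_singleton]
    linear_combination -CharTwo.add_self_eq_zero (((p a).edges.map ℓ).sum)
  · have hb := hT.mem_support_of_ne_mem_support_of_adj_of_isPath (hp a) (hp b) hab ha
    rw [hT.path_concat (hp b) (hp a) hab.symm hb]
    simp only [Walk.edges_concat, List.concat_eq_append, List.map_append, List.sum_append,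
      List.map_singleton, List.sum_singleton, Sym2.eq_swap]
    linear_combination -CharTwo.add_self_eq_zero (((p b).edges.map ℓ).sum)

lemma IsTree.exists_forall_eq_edgeCoboundary (hT : T.IsTree) (ℓ : Sym2 V → ZMod 2) :
    ∃ φ : V → ZMod 2, ∀ e ∈ T.edgeSet, ℓ e = edgeCoboundary φ e := by
  obtain ⟨r⟩ := hT.1.nonempty
  choose p hp using fun v => (hT.1 r v).exists_isPath
  exact ⟨_, fun e he => hT.2.eq_edgeCoboundary_of_mem_edgeSet ℓ hp he⟩

lemma Walk.isCycle_cons_mapLe (hT : T ≤ G) {a b : V} {q : T.Walk b a} (hq : q.IsPath)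
    (hab : G.Adj a b) (hnT : s(a, b) ∉ T.edgeSet) : (Walk.cons hab (q.mapLe hT)).IsCycle := by
  rw [Walk.cons_isCycle_iff, Walk.edges_mapLe_eq_edges]
  exact ⟨hq.mapLe hT, fun h => hnT (q.edges_subset_edgeSet h)⟩

lemma Walk.existsUnique_mem_edges_cons_mapLe_notMem_edgeSet (hT : T ≤ G) {a b : V}
    (q : T.Walk b a) (hab : G.Adj a b) (hnT : s(a, b) ∉ T.edgeSet) :
    ∃! e, e ∈ (Walk.cons hab (q.mapLe hT)).edges ∧ e ∉ T.edgeSet := by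
  refine ⟨s(a, b), ⟨by simp, hnT⟩, ?_⟩
  rintro e ⟨he, heT⟩
  rw [Walk.edges_cons, Walk.edges_mapLe_eq_edges, List.mem_cons] at he
  exact he.resolve_right fun h => heT (q.edges_subset_edgeSet h)

end SimpleGraph

theorem stmt3_general {V : Type*} (G : SimpleGraph V) (ℓ : Sym2 V → ZMod 2)
    (T : SimpleGraph V) (hT : T ≤ G) (hTconn : T.Connected)
    (hTacyclic : T.IsAcyclic)
    (h : ∃ (v : V) (c : G.Walk v v), c.IsCycle ∧ (c.edges.map ℓ).sum = 1) :
    ∃ (v : V) (c : G.Walk v v), c.IsCycle ∧ (c.edges.map ℓ).sum = 1 ∧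
      (∃! e : Sym2 V, e ∈ c.edges ∧ e ∉ T.edgeSet) := by
  obtain ⟨v, c, -, hc⟩ := h
  obtain ⟨φ, hφ⟩ := IsTree.exists_forall_eq_edgeCoboundary ⟨hTconn, hTacyclic⟩ ℓ
  set ℓ' : Sym2 V → ZMod 2 := fun e => ℓ e + edgeCoboundary φ e
  have hℓ'T : ∀ e ∈ T.edgeSet, ℓ' e = 0 := fun e he => by
    rw [show ℓ' e = ℓ e + edgeCoboundary φ e from rfl, ← hφ e he, CharTwo.add_self_eq_zero]
  obtain ⟨e, hec, he⟩ : ∃ e ∈ c.edges, ℓ' e ≠ 0 := by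
    simpa using List.exists_mem_ne_zero_of_sum_ne_zero (l := c.edges.map ℓ')
      (by rw [c.sum_map_add_edgeCoboundary_of_closed, hc]; exact one_ne_zero)
  induction e using Sym2.ind with | _ a b =>
  have hnT : s(a, b) ∉ T.edgeSet := fun hab => he (hℓ'T _ hab)
  obtain ⟨q, hq⟩ := (hTconn b a).exists_isPath
  have hab := c.adj_of_mem_edges hec
  refine ⟨a, .cons hab (q.mapLe hT), Walk.isCycle_cons_mapLe hT hq hab hnT, ?_,
    Walk.existsUnique_mem_edges_cons_mapLe_notMem_edgeSet hT q hab hnT⟩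
  rw [← Walk.sum_map_add_edgeCoboundary_of_closed ℓ φ, Walk.edges_cons,
    Walk.edges_mapLe_eq_edges, List.map_cons, List.sum_cons,
    List.sum_eq_zero (by simpa using fun e he => hℓ'T e (q.edges_subset_edgeSet he)), add_zero]
  exact (by decide : ∀ x : ZMod 2, x ≠ 0 → x = 1) _ he

/-- Let `(G, ℓ)` be a `ZMod 2`-labeled connected graph on a finite vertex
type, and `T` a spanning tree of `G`. If `G` contains an odd-labeled cycle, then `G`
contains an odd-labeled cycle exactly one of whose edges is not an edge of `T`. -/
theorem stmt3 {V : Type*} [Fintype V] (G : SimpleGraph V) (ℓ : Sym2 V → ZMod 2)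
    (hG : G.Connected) (T : SimpleGraph V) (hT : T ≤ G) (hTconn : T.Connected)
    (hTacyclic : T.IsAcyclic)
    (h : ∃ (v : V) (c : G.Walk v v), c.IsCycle ∧ (c.edges.map ℓ).sum = 1) :
    ∃ (v : V) (c : G.Walk v v), c.IsCycle ∧ (c.edges.map ℓ).sum = 1 ∧
      (∃! e : Sym2 V, e ∈ c.edges ∧ e ∉ T.edgeSet) :=
  stmt3_general G ℓ T hT hTconn hTacyclic h
end

section
/- Let (G, ℓ) be a connected k-labeled graph on a finite vertex type and T a spanning tree of G. For each edge e = {u, v} of G that is not an edge of T, let γ_e denote the fundamental cycle of e: the closed walk obtained by traversing the edge e from u to v and then the unique path in T from v back to u. Then for all i, j : Fin k the following are equivalent: (a) every cycle γ of G satisfies parity_i(γ) = parity_j(γ); (b) for every edge e of G not in T, parity_i(γ_e) = parity_j(γ_e). -/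
/-!
Put `f e := ℓ e i - ℓ e j`. In characteristic two every edge function on a tree is a
coboundary, `f {u, v} = φ v - φ u`, with `φ v` the `f`-sum along the tree path from a fixed
root to `v`: the paths to the two ends of a tree edge differ by exactly that edge.
A fundamental cycle has `f`-sum `f e - (φ v - φ u)`, so if all of them vanish then `f` is
a coboundary on every edge of `G`, and the `f`-sum of any closed walk of `G` telescopes to
zero. Conversely every fundamental cycle is a cycle.
-/

open SimpleGraph

theorem List.sum_map_sub {ι M : Type*} [AddCommGroup M] (l : List ι) (f g : ι → M) :
    (l.map fun i => f i - g i).sum = (l.map f).sum - (l.map g).sum := by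
  simpa using Multiset.sum_map_sub (m := (l : Multiset ι)) (f := f) (g := g)

namespace SimpleGraph

variable {V : Type*} {G : SimpleGraph V}

theorem Walk.sum_map_edges_eq_sub_of_adj {M : Type*} [AddCommGroup M]
    {f : Sym2 V → M} {φ : V → M} (hφ : ∀ u v, G.Adj u v → f s(u, v) = φ v - φ u)
    {a b : V} (w : G.Walk a b) :
    (w.edges.map f).sum = φ b - φ a := by
  induction w with
  | nil => simp
  | cons h _ ih => rw [Walk.edges_cons, List.map_cons, List.sum_cons, ih, hφ _ _ h]; abel

theorem IsAcyclic.exists_potential {R : Type*} [Ring R] [CharP R 2] (hG : G.IsAcyclic)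
    (hconn : G.Connected) (f : Sym2 V → R) :
    ∃ φ : V → R, ∀ u v, G.Adj u v → f s(u, v) = φ v - φ u := by
  classical
  let r := hconn.nonempty.some
  let φ v := (((hconn r v).some.toPath : G.Walk r v).edges.map f).sum
  have hpath {v : V} (p : G.Walk r v) (hp : p.IsPath) : (p.edges.map f).sum = φ v :=
    congrArg (fun q : G.Path r v => ((q : G.Walk r v).edges.map f).sum)
      ((hG.subsingleton_path r v).elim ⟨p, hp⟩ _)
  have hconcat {v w : V} (h : G.Adj v w) (p : G.Walk r v) (hp : p.IsPath) (q : G.Walk r w)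
      (hq : q.IsPath) (hv : v ∈ q.support) : φ w = φ v + f s(v, w) := by
    rw [← hpath q hq, ← hpath p hp, hG.path_concat hp hq h hv, Walk.edges_concat,
      List.map_concat, List.sum_concat]
  refine ⟨φ, fun u v h => ?_⟩
  obtain ⟨p, hp⟩ := (hconn r u).some.toPath
  obtain ⟨q, hq⟩ := (hconn r v).some.toPath
  by_cases hu : u ∈ q.support
  · rw [hconcat h p hp q hq hu]; abel
  · have hv := hG.mem_support_of_ne_mem_support_of_adj_of_isPath hp hq h hu
    rw [hconcat h.symm q hq p hp hv, sub_add_cancel_left, CharTwo.neg_eq, Sym2.eq_swap]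

theorem sum_map_edges_eq_zero_of_fundamental_cycles {R : Type*} [Ring R] [CharP R 2]
    {T : SimpleGraph V} (hT : T ≤ G) (hTconn : T.Connected) (hTacyclic : T.IsAcyclic)
    {f : Sym2 V → R}
    (hfund : ∀ (u v : V) (h : G.Adj u v), s(u, v) ∉ T.edgeSet →
      ∀ p : T.Walk v u, p.IsPath → ((Walk.cons h (p.mapLe hT)).edges.map f).sum = 0)
    {a : V} (γ : G.Walk a a) : (γ.edges.map f).sum = 0 := by
  classical
  obtain ⟨φ, hφ⟩ := hTacyclic.exists_potential hTconn f
  have hφG : ∀ u v, G.Adj u v → f s(u, v) = φ v - φ u := by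
    intro u v h
    by_cases huv : s(u, v) ∈ T.edgeSet
    · exact hφ u v huv
    · let p := (hTconn v u).some.toPath
      have hcycle := hfund u v h huv p p.2
      rw [Walk.edges_cons, Walk.edges_mapLe_eq_edges, List.map_cons, List.sum_cons,
        Walk.sum_map_edges_eq_sub_of_adj hφ] at hcycle
      rw [eq_neg_of_add_eq_zero_left hcycle, neg_sub]
  rw [Walk.sum_map_edges_eq_sub_of_adj hφG, sub_self]

end SimpleGraph

theorem stmt4_general {V : Type*} {k : ℕ} (G : SimpleGraph V)
    (ℓ : Sym2 V → Fin k → ZMod 2)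
    (T : SimpleGraph V) (hT : T ≤ G) (hTconn : T.Connected) (hTacyclic : T.IsAcyclic)
    (i j : Fin k) :
    (∀ (v : V) (γ : G.Walk v v), γ.IsCycle →
        (γ.edges.map (fun e => ℓ e i)).sum = (γ.edges.map (fun e => ℓ e j)).sum) ↔
    (∀ (u v : V) (h : G.Adj u v), s(u, v) ∉ T.edgeSet →
        ∀ p : T.Walk v u, p.IsPath →
          ((Walk.cons h (p.mapLe hT)).edges.map (fun e => ℓ e i)).sum =
          ((Walk.cons h (p.mapLe hT)).edges.map (fun e => ℓ e j)).sum) := by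
  constructor
  · intro hcycles u v h huv p hp
    refine hcycles u _ ((Walk.cons_isCycle_iff _ h).mpr ⟨hp.mapLe hT, fun hmem => huv ?_⟩)
    rw [Walk.edges_mapLe_eq_edges] at hmem
    exact p.edges_subset_edgeSet hmem
  · intro hfund v γ _
    rw [← sub_eq_zero, ← List.sum_map_sub]
    refine sum_map_edges_eq_zero_of_fundamental_cycles hT hTconn hTacyclic
      (fun u v h huv p hp => ?_) γ
    rw [List.sum_map_sub, hfund u v h huv p hp, sub_self]

/-- For a connected `k`-labeled graph `(G, ℓ)` on a finite vertex type with
spanning tree `T`, and `i j : Fin k`: every cycle `γ` of `G` satisfies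
`parity_i γ = parity_j γ` iff every fundamental cycle (a non-tree edge `{u,v}` of `G`
together with the unique path in `T` from `v` back to `u`) does. -/
theorem stmt4 {V : Type*} [Fintype V] {k : ℕ} (G : SimpleGraph V)
    (ℓ : Sym2 V → Fin k → ZMod 2) (hG : G.Connected)
    (T : SimpleGraph V) (hT : T ≤ G) (hTconn : T.Connected) (hTacyclic : T.IsAcyclic)
    (i j : Fin k) :
    (∀ (v : V) (γ : G.Walk v v), γ.IsCycle →
        (γ.edges.map (fun e => ℓ e i)).sum = (γ.edges.map (fun e => ℓ e j)).sum) ↔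
    (∀ (u v : V) (h : G.Adj u v), s(u, v) ∉ T.edgeSet →
        ∀ p : T.Walk v u, p.IsPath →
          ((Walk.cons h (p.mapLe hT)).edges.map (fun e => ℓ e i)).sum =
          ((Walk.cons h (p.mapLe hT)).edges.map (fun e => ℓ e j)).sum) :=
  stmt4_general G ℓ T hT hTconn hTacyclic i j
end

section
/- Let G be a simple graph on a vertex type V_G, let V_H be a finite type, E a finite index type, a, b : E → V_H two endpoint functions, f : V_H → V_G a function, and for each e : E let w_e be a walk in G from f(a e) to f(b e) of length at least 1. Then the cardinality of the set (range of f) ∪ ⋃_{e : E} (support of w_e) is at most |V_H| + Σ_{e : E} (length(w_e) − 1); equivalently, it is at most |V_H| − |E| + Σ_{e : E} length(w_e). -/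
/-! A vertex on `w e` outside `range f` is an interior vertex of `w e`, and a walk of length `ℓ`
has at most `ℓ - 1` interior vertices. -/

theorem List.ncard_setOf_mem_le_length {α : Type*} (l : List α) :
    {x | x ∈ l}.ncard ≤ l.length := by
  classical
  rw [← List.coe_toFinset, Set.ncard_coe_finset]
  exact l.toFinset_card_le

namespace SimpleGraph.Walk

variable {V : Type*} {G : SimpleGraph V}

theorem ncard_support_sdiff_le {u v : V} (p : G.Walk u v) {A : Set V} (hu : u ∈ A)
    (hv : v ∈ A) :
    ({x | x ∈ p.support} \ A).ncard ≤ p.length - 1 := by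
  cases p with
  | nil => simpa [Set.sdiff_eq_empty] using hu
  | @cons _ _ _ h q =>
    have hsub : {x | x ∈ (cons h q).support} \ A ⊆ {x | x ∈ q.support} \ {v} := by
      rintro x ⟨hx, hxA⟩
      simp only [Set.mem_ofPred_eq, support_cons, List.mem_cons] at hx
      exact ⟨hx.resolve_left (by rintro rfl; exact hxA hu), by rintro rfl; exact hxA hv⟩
    calc _ ≤ ({x | x ∈ q.support} \ {v}).ncard :=
          Set.ncard_le_ncard hsub (List.finite_toSet _).sdiff
      _ = {x | x ∈ q.support}.ncard - 1 :=
          Set.ncard_sdiff_singleton_of_mem (s := {x | x ∈ q.support}) q.end_mem_support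
      _ ≤ q.support.length - 1 := Nat.sub_le_sub_right q.support.ncard_setOf_mem_le_length 1
      _ = (cons h q).length - 1 := by simp

end SimpleGraph.Walk

theorem stmt6_general {VG VH : Type*} [Fintype VH] {E : Type*} [Fintype E]
    (G : SimpleGraph VG) (a b : E → VH) (f : VH → VG)
    (w : (e : E) → G.Walk (f (a e)) (f (b e))) :
    (Set.range f ∪ ⋃ e : E, {v | v ∈ (w e).support}).ncard ≤
      Fintype.card VH + ∑ e : E, ((w e).length - 1) := by
  rw [← Set.union_sdiff_self, Set.iUnion_sdiff]
  refine (Set.ncard_union_le _ _).trans (add_le_add ?_ ?_)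
  · rw [← Set.image_univ]
    exact (Set.ncard_image_le Set.finite_univ).trans
      (Set.ncard_univ VH ▸ Nat.card_eq_fintype_card.le)
  · exact (Set.ncard_iUnion_le_of_fintype _).trans <| Finset.sum_le_sum fun e _ =>
      (w e).ncard_support_sdiff_le ⟨a e, rfl⟩ ⟨b e, rfl⟩

/-- Given walks `w e : G.Walk (f (a e)) (f (b e))` of length at least `1`
for each `e` in a finite index type `E`, the set `range f ∪ ⋃ e, support (w e)` has at
most `|V_H| + ∑ e, (length (w e) - 1)` elements. -/
theorem stmt6 {VG VH : Type*} [Fintype VH] {E : Type*} [Fintype E]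
    (G : SimpleGraph VG) (a b : E → VH) (f : VH → VG)
    (w : (e : E) → G.Walk (f (a e)) (f (b e)))
    (hlen : ∀ e, 1 ≤ (w e).length) :
    (Set.range f ∪ ⋃ e : E, {v | v ∈ (w e).support}).ncard ≤
      Fintype.card VH + ∑ e : E, ((w e).length - 1) :=
  stmt6_general G a b f w
end

section
/- Let G be a connected finite simple graph in which every vertex has degree at least 2, and let T be a spanning tree of G. Then the number of vertices of degree 1 in T (leaves of T) is at most 2·(|E(G)| − |E(T)|), twice the number of edges of G that are not edges of T. -/
open SimpleGraph

/-! Each leaf `v` of `T` has `G`-degree at least `2`, so some edge of `G` at `v` is missing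
from `T`. Assigning to every leaf such an edge, each edge of `G` outside `T` is assigned to at
most its two endpoints. -/

open Finset

theorem Finset.card_le_two_mul_card_of_forall_exists_mem {α : Type*} [DecidableEq α]
    {s : Finset α} {S : Finset (Sym2 α)} (h : ∀ v ∈ s, ∃ e ∈ S, v ∈ e) : #s ≤ 2 * #S := by
  have hcover : s ⊆ S.biUnion Sym2.toFinset := fun v hv => by
    obtain ⟨e, he, hve⟩ := h v hv
    exact mem_biUnion.2 ⟨e, he, Sym2.mem_toFinset.2 hve⟩
  calc #s ≤ #(S.biUnion Sym2.toFinset) := card_le_card hcover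
    _ ≤ ∑ e ∈ S, #e.toFinset := card_biUnion_le
    _ ≤ ∑ _e ∈ S, 2 := sum_le_sum fun e _ => by rw [Sym2.card_toFinset]; split_ifs <;> omega
    _ = 2 * #S := by rw [sum_const, smul_eq_mul, mul_comm]

namespace SimpleGraph

variable {V : Type*} [Fintype V] [DecidableEq V] {G H : SimpleGraph V}
  [DecidableRel G.Adj] [DecidableRel H.Adj]

theorem exists_mem_edgeFinset_sdiff_of_degree_lt {v : V} (h : H.degree v < G.degree v) :
    ∃ e ∈ G.edgeFinset \ H.edgeFinset, v ∈ e := by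
  have hne : ¬ G.neighborFinset v ⊆ H.neighborFinset v := fun hsub =>
    (card_le_card hsub).not_gt (by simpa only [card_neighborFinset_eq_degree] using h)
  obtain ⟨w, hwG, hwH⟩ := not_subset.1 hne
  rw [mem_neighborFinset] at hwG hwH
  exact ⟨s(v, w), mem_sdiff.2 ⟨(mem_edgeFinset).2 hwG, fun hw => hwH ((mem_edgeFinset).1 hw)⟩,
    Sym2.mem_mk_left v w⟩

end SimpleGraph

theorem stmt7_general {V : Type*} [Fintype V] [DecidableEq V] (G : SimpleGraph V)
    [DecidableRel G.Adj] (hdeg : ∀ v, 2 ≤ G.degree v)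
    (T : SimpleGraph V) [DecidableRel T.Adj] (hT : T ≤ G) :
    (Finset.univ.filter (fun v => T.degree v = 1)).card ≤
      2 * (G.edgeFinset.card - T.edgeFinset.card) := by
  have hleaf : ∀ v ∈ univ.filter (fun v => T.degree v = 1),
      ∃ e ∈ G.edgeFinset \ T.edgeFinset, v ∈ e := fun v hv =>
    exists_mem_edgeFinset_sdiff_of_degree_lt (by rw [(mem_filter.1 hv).2]; exact hdeg v)
  calc _ ≤ 2 * #(G.edgeFinset \ T.edgeFinset) := card_le_two_mul_card_of_forall_exists_mem hleaf
    _ = _ := by rw [card_sdiff_of_subset (edgeFinset_mono hT)]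

/-- Let `G` be a connected finite simple graph with minimum degree at least
`2` and `T` a spanning tree of `G`. Then the number of leaves of `T` (vertices of degree
`1` in `T`) is at most twice the number of edges of `G` not in `T`. -/
theorem stmt7 {V : Type*} [Fintype V] [DecidableEq V] (G : SimpleGraph V)
    [DecidableRel G.Adj] (hG : G.Connected) (hdeg : ∀ v, 2 ≤ G.degree v)
    (T : SimpleGraph V) [DecidableRel T.Adj] (hT : T ≤ G) (hTconn : T.Connected)
    (hTacyclic : T.IsAcyclic) :
    (Finset.univ.filter (fun v => T.degree v = 1)).card ≤
      2 * (G.edgeFinset.card - T.edgeFinset.card) :=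
  stmt7_general G hdeg T hT
end

section
/- Let G be a connected finite simple graph in which every vertex has degree at least 2, let T be a spanning tree of G, and let t = |E(G)| − |E(T)| be the number of non-tree edges. Then the number of vertices whose degree in G is at least 3 is at most 4t. -/
/-!
Counting degrees: if every degree is at least `2`, the handshake lemma gives
`2 |E(G)| = ∑ deg v ≥ 2 n + #{v | deg v ≥ 3}`, while the spanning tree has `n - 1` edges,
so `#{v | deg v ≥ 3} ≤ 2 t - 2`.
-/

namespace SimpleGraph

theorem mul_card_add_card_filter_lt_degree_le_sum_degrees {V : Type*} [Fintype V]
    (G : SimpleGraph V) [DecidableRel G.Adj] (k : ℕ) (hk : ∀ v, k ≤ G.degree v) :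
    k * Fintype.card V + (Finset.univ.filter (fun v => k < G.degree v)).card ≤
      ∑ v, G.degree v := by
  have hpointwise : ∀ v, k + (if k < G.degree v then 1 else 0) ≤ G.degree v := by
    intro v
    split_ifs with h
    · exact h
    · exact Nat.add_zero k ▸ hk v
  calc k * Fintype.card V + (Finset.univ.filter (fun v => k < G.degree v)).card
      = ∑ v, (k + if k < G.degree v then 1 else 0) := by
        rw [Finset.sum_add_distrib, Finset.sum_boole, Finset.sum_const, Finset.card_univ,
          smul_eq_mul, mul_comm, Nat.cast_id]
    _ ≤ ∑ v, G.degree v := Finset.sum_le_sum fun v _ => hpointwise v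

end SimpleGraph

theorem stmt9_general {V : Type*} [Fintype V] (G : SimpleGraph V)
    [DecidableRel G.Adj] (hdeg : ∀ v, 2 ≤ G.degree v)
    (T : SimpleGraph V) [DecidableRel T.Adj] (hTconn : T.Connected)
    (hTacyclic : T.IsAcyclic) :
    (Finset.univ.filter (fun v => 3 ≤ G.degree v)).card ≤
      4 * (G.edgeFinset.card - T.edgeFinset.card) := by
  have hdegrees := G.mul_card_add_card_filter_lt_degree_le_sum_degrees 2 hdeg
  have htree_edges := (⟨hTconn, hTacyclic⟩ : T.IsTree).card_edgeFinset
  rw [G.sum_degrees_eq_twice_card_edges] at hdegrees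
  change _ + (Finset.univ.filter (fun v => 3 ≤ G.degree v)).card ≤ _ at hdegrees
  omega

/-- Let `G` be a connected finite simple graph with minimum degree at least
`2`, `T` a spanning tree of `G`, and `t = |E(G)| - |E(T)|` the number of non-tree edges.
Then the number of vertices of degree at least `3` in `G` is at most `4 * t`. -/
theorem stmt9 {V : Type*} [Fintype V] [DecidableEq V] (G : SimpleGraph V)
    [DecidableRel G.Adj] (hG : G.Connected) (hdeg : ∀ v, 2 ≤ G.degree v)
    (T : SimpleGraph V) [DecidableRel T.Adj] (hT : T ≤ G) (hTconn : T.Connected)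
    (hTacyclic : T.IsAcyclic) :
    (Finset.univ.filter (fun v => 3 ≤ G.degree v)).card ≤
      4 * (G.edgeFinset.card - T.edgeFinset.card) :=
  stmt9_general G hdeg T hTconn hTacyclic
end

section
/- Let (H, ℓ_H) and (G, ℓ_G) be k-labeled graphs, let f : V_H → V_G be a function, and suppose that for every pair of vertices u, v with H.Adj u v there is a chosen walk w_{u,v} in G from f(u) to f(v) such that for every i : Fin k, parity_i(w_{u,v}) equals the i-th component of ℓ_H({u, v}). If H contains a cycle γ with parity_i(γ) ≠ parity_j(γ) for some i, j : Fin k, then G contains a cycle γ' with parity_i(γ') ≠ parity_j(γ'). -/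
/-!
Put `g e = ℓ_G(e)_i + ℓ_G(e)_j`. Replacing every edge of `γ` by its chosen walk gives a closed
walk of `G` whose `g`-sum is `parity_i(γ) + parity_j(γ) ≠ 0`. Over a ring of characteristic two
the `g`-sum of a closed walk vanishes as soon as it vanishes on every cycle: shortcutting a walk
to its `bypass` discards closed subwalks `u → v ⇝ u` whose return leg is a path, and such a
subwalk is either a cycle or traverses a single edge twice. So some cycle of `G` has nonzero
`g`-sum, i.e. different `i`- and `j`-parities.
-/

open SimpleGraph

namespace SimpleGraph.Walk

section CycleSums

variable {V R : Type*} [Ring R] [CharP R 2] {G : SimpleGraph V} {g : Sym2 V → R}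
  (hcyc : ∀ (u : V) (c : G.Walk u u), c.IsCycle → (c.edges.map g).sum = 0)
include hcyc

theorem sum_edges_cons_eq_zero_of_isPath {u v : V} (h : G.Adj u v) {q : G.Walk v u}
    (hq : q.IsPath) : ((cons h q).edges.map g).sum = 0 := by
  by_cases he : s(u, v) ∈ q.edges
  · rw [hq.eq_adj_toWalk_of_mem_edges (Sym2.eq_swap ▸ he)]
    simp [Sym2.eq_swap, CharTwo.add_self_eq_zero]
  · exact hcyc u _ ((cons_isCycle_iff q h).mpr ⟨hq, he⟩)

theorem sum_edges_bypass [DecidableEq V] {u v : V} (p : G.Walk u v) :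
    (p.bypass.edges.map g).sum = (p.edges.map g).sum := by
  induction p with
  | nil => rfl
  | @cons u _ _ h p ih =>
    rw [bypass]
    split_ifs with hs
    · have hloop := sum_edges_cons_eq_zero_of_isPath hcyc h
        ((bypass_isPath p).takeUntil hs)
      have hsplit := congrArg (fun q => (q.edges.map g).sum) (p.bypass.take_spec hs)
      simp only [edges_append, edges_cons, List.map_append, List.map_cons, List.sum_append,
        List.sum_cons] at hsplit hloop ⊢
      rw [← ih, ← hsplit, ← add_assoc, hloop, zero_add]
    · simp only [edges_cons, List.map_cons, List.sum_cons, ih]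

theorem sum_edges_eq_zero_of_forall_isCycle {u : V} (c : G.Walk u u) :
    (c.edges.map g).sum = 0 := by
  classical
  rw [← sum_edges_bypass hcyc, (isPath_iff_nil.mp (bypass_isPath c)).eq_nil, edges_nil,
    List.map_nil, List.sum_nil]

end CycleSums

theorem exists_isCycle_sum_edges_ne_zero {V R : Type*} [Ring R] [CharP R 2]
    {G : SimpleGraph V} {g : Sym2 V → R} {u : V} (c : G.Walk u u)
    (hc : (c.edges.map g).sum ≠ 0) :
    ∃ (v : V) (c' : G.Walk v v), c'.IsCycle ∧ (c'.edges.map g).sum ≠ 0 := by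
  by_contra! hcyc
  exact hc (sum_edges_eq_zero_of_forall_isCycle hcyc c)

def subst {V V' : Type*} {G : SimpleGraph V} {G' : SimpleGraph V'} (f : V → V')
    (w : ∀ u v, G.Adj u v → G'.Walk (f u) (f v)) : ∀ {a b : V}, G.Walk a b → G'.Walk (f a) (f b)
  | _, _, nil => nil
  | _, _, cons h p => (w _ _ h).append (subst f w p)

theorem sum_edges_subst {V V' M : Type*} [AddMonoid M] {G : SimpleGraph V}
    {G' : SimpleGraph V'} (f : V → V') (w : ∀ u v, G.Adj u v → G'.Walk (f u) (f v))
    {g' : Sym2 V' → M} {g : Sym2 V → M}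
    (hw : ∀ u v (h : G.Adj u v), ((w u v h).edges.map g').sum = g s(u, v))
    {a b : V} (p : G.Walk a b) :
    ((p.subst f w).edges.map g').sum = (p.edges.map g).sum := by
  induction p with
  | nil => rfl
  | cons h p ih =>
    rw [subst, edges_append, List.map_append, List.sum_append, ih, hw, edges_cons,
      List.map_cons, List.sum_cons]

end SimpleGraph.Walk

/-- If `(f, w)` is a parity-preserving mapping from the `k`-labeled graph
`(H, ℓH)` to the `k`-labeled graph `(G, ℓG)`, and `H` contains a cycle whose `i`-th and
`j`-th parities differ, then so does `G`. -/
theorem stmt10 {VH VG : Type*} {k : ℕ}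
    (H : SimpleGraph VH) (ℓH : Sym2 VH → Fin k → ZMod 2)
    (G : SimpleGraph VG) (ℓG : Sym2 VG → Fin k → ZMod 2)
    (f : VH → VG) (w : ∀ u v, H.Adj u v → G.Walk (f u) (f v))
    (hw : ∀ (u v : VH) (h : H.Adj u v) (i : Fin k),
        (((w u v h).edges.map (fun e => ℓG e i)).sum) = ℓH s(u, v) i)
    (i j : Fin k)
    (hγ : ∃ (x : VH) (γ : H.Walk x x), γ.IsCycle ∧
        (γ.edges.map (fun e => ℓH e i)).sum ≠ (γ.edges.map (fun e => ℓH e j)).sum) :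
    ∃ (y : VG) (γ' : G.Walk y y), γ'.IsCycle ∧
      (γ'.edges.map (fun e => ℓG e i)).sum ≠ (γ'.edges.map (fun e => ℓG e j)).sum := by
  obtain ⟨x, γ, -, hγne⟩ := hγ
  have hsubst : ((γ.subst f w).edges.map (fun e => ℓG e i + ℓG e j)).sum ≠ 0 := by
    rw [List.sum_map_add,
      Walk.sum_edges_subst f w (g := fun e => ℓH e i) (fun u v h => hw u v h i),
      Walk.sum_edges_subst f w (g := fun e => ℓH e j) (fun u v h => hw u v h j)]
    exact mt CharTwo.add_eq_zero.mp hγne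
  obtain ⟨y, γ', hγ', hne⟩ := Walk.exists_isCycle_sum_edges_ne_zero _ hsubst
  rw [List.sum_map_add] at hne
  exact ⟨y, γ', hγ', mt CharTwo.add_eq_zero.mpr hne⟩
end

section
/- Let k ≥ 1, let (G, ℓ) be a k-labeled graph on a finite vertex type, and let P be a set of pairs of elements of Fin k. Suppose G is P-good, but for every edge e of G the graph obtained from G by deleting e is not P-good. Then for every spanning forest F of G, the number of edges of G that are not edges of F is strictly less than k. -/
/-!
For each edge `f` outside the forest, let `w_f ∈ (ZMod 2)^k` be the label sum of its fundamental
closed walk `C_f` (the edge `f` followed by the forest path back), and use minimality to pick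
`p_f ∈ P` such that the functional `χ_f = x_{p_f.1} - x_{p_f.2}` vanishes on every cycle of
`G - f`. A function on edges that sums to zero over every cycle does so over every closed walk,
because in characteristic two a closed walk splits into cycles and edges traversed back and forth.
Hence `χ_e (w_f) = 0` for `e ≠ f`, since `C_f` avoids `e`. On the other hand `χ_f (w_f) ≠ 0`:
goodness gives a cycle with nonzero `χ_f`-sum, it must pass through `f`, and cutting it at `f`
and closing it up with the forest path gives a closed walk of `G - f`, so its sum equals that of
`C_f`. Thus the `χ_f` are linearly independent functionals, all vanishing on the all-ones vector,
and there are fewer than `k` of them.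
-/

open SimpleGraph

namespace SimpleGraph

variable {V : Type*} {G : SimpleGraph V}

namespace Walk

section edgeSum

variable {M : Type*} [AddCommMonoid M]

def edgeSum {u v : V} (p : G.Walk u v) (φ : Sym2 V → M) : M := (p.edges.map φ).sum

variable (φ : Sym2 V → M)

@[simp] lemma edgeSum_nil {u : V} : (nil : G.Walk u u).edgeSum φ = 0 := rfl

@[simp] lemma edgeSum_cons {u v w : V} (h : G.Adj u v) (p : G.Walk v w) :
    (cons h p).edgeSum φ = φ s(u, v) + p.edgeSum φ := by
  simp [edgeSum]

@[simp] lemma edgeSum_append {u v w : V} (p : G.Walk u v) (q : G.Walk v w) :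
    (p.append q).edgeSum φ = p.edgeSum φ + q.edgeSum φ := by
  simp [edgeSum]

@[simp] lemma edgeSum_reverse {u v : V} (p : G.Walk u v) :
    p.reverse.edgeSum φ = p.edgeSum φ := by
  simp [edgeSum, List.sum_reverse]

@[simp] lemma edgeSum_transfer {u v : V} (p : G.Walk u v) {H : SimpleGraph V}
    (hp : ∀ e ∈ p.edges, e ∈ H.edgeSet) : (p.transfer H hp).edgeSum φ = p.edgeSum φ := by
  simp [edgeSum]

lemma map_edgeSum {N F : Type*} [AddCommMonoid N] [FunLike F M N] [AddMonoidHomClass F M N]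
    (g : F) {u v : V} (p : G.Walk u v) : g (p.edgeSum φ) = p.edgeSum (g ∘ φ) := by
  simp [edgeSum, map_list_sum]

end edgeSum

lemma edgeSum_sub {M : Type*} [AddCommGroup M] (φ ψ : Sym2 V → M) {u v : V} (p : G.Walk u v) :
    p.edgeSum (φ - ψ) = p.edgeSum φ - p.edgeSum ψ := by
  induction p with
  | nil => simp
  | cons h p ih =>
    simp only [edgeSum_cons, ih, Pi.sub_apply]
    abel

lemma exists_eq_append_cons_of_mem_darts {d : G.Dart} :
    ∀ {u v : V} {p : G.Walk u v}, d ∈ p.darts →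
      ∃ (q : G.Walk u d.fst) (r : G.Walk d.snd v), p = q.append (cons d.adj r)
  | _, _, .nil, hd => by simp at hd
  | _, _, .cons h p, hd => by
    rcases List.mem_cons.mp hd with rfl | hd
    · exact ⟨.nil, p, rfl⟩
    · obtain ⟨q, r, rfl⟩ := exists_eq_append_cons_of_mem_darts hd
      exact ⟨.cons h q, r, rfl⟩

end Walk

lemma exists_walk_edges_subset_of_le {F : SimpleGraph V} (hF : F ≤ G) {u v : V}
    (h : F.Reachable u v) : ∃ r : G.Walk u v, ∀ e ∈ r.edges, e ∈ F.edgeSet := by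
  obtain ⟨w⟩ := h
  refine ⟨w.transfer G fun e he ↦ edgeSet_mono hF (w.edges_subset_edgeSet he), fun e he ↦ ?_⟩
  rw [Walk.edges_transfer] at he
  exact w.edges_subset_edgeSet he

lemma exists_adj_walk_edges_subset_of_le {F : SimpleGraph V} (hF : F ≤ G)
    (hFG : ∀ ⦃u v : V⦄, G.Adj u v → F.Reachable u v) {e : Sym2 V} (he : e ∈ G.edgeSet) :
    ∃ x y, G.Adj x y ∧ s(x, y) = e ∧ ∃ r : G.Walk y x, ∀ e' ∈ r.edges, e' ∈ F.edgeSet := by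
  induction e using Sym2.ind with
  | _ x y =>
    obtain ⟨r, hr⟩ := exists_walk_edges_subset_of_le hF (hFG (G.adj_symm he))
    exact ⟨x, y, he, rfl, r, hr⟩

def IsCycleBalanced (G : SimpleGraph V) (φ : Sym2 V → ZMod 2) : Prop :=
  ∀ ⦃v : V⦄ (c : G.Walk v v), c.IsCycle → c.edgeSum φ = 0

lemma isCycleBalanced_sub_iff {φ ψ : Sym2 V → ZMod 2} :
    G.IsCycleBalanced (φ - ψ) ↔
      ∀ (v : V) (c : G.Walk v v), c.IsCycle → c.edgeSum φ = c.edgeSum ψ := by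
  simp only [IsCycleBalanced, Walk.edgeSum_sub, sub_eq_zero]

namespace IsCycleBalanced

variable {φ : Sym2 V → ZMod 2}

lemma edgeSum_cons_eq_zero (hφ : G.IsCycleBalanced φ) {u v : V} (h : G.Adj u v)
    {p : G.Walk v u} (hp : p.IsPath) : (Walk.cons h p).edgeSum φ = 0 := by
  by_cases he : s(u, v) ∈ p.edges
  · -- a path from `v` to `u` through the edge `uv` is that edge alone
    cases p with
    | nil => exact absurd rfl h.ne
    | @cons _ w _ h' q =>
      have hq := (Walk.cons_isPath_iff h' q).mp hp
      obtain rfl | hwu := eq_or_ne w u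
      · obtain rfl := Walk.eq_nil_iff_nil.mpr (Walk.isPath_iff_nil.mp hq.1)
        simp [Sym2.eq_swap, CharTwo.add_self_eq_zero]
      · have : s(u, v) ∈ q.edges := by
          simpa [Sym2.eq_swap, hwu, hwu.symm, h.ne] using he
        exact absurd (q.snd_mem_support_of_mem_edges this) hq.2
  · exact hφ _ ((Walk.cons_isCycle_iff p h).mpr ⟨hp, he⟩)

lemma edgeSum_bypass (hφ : G.IsCycleBalanced φ) [DecidableEq V] {u v : V} (p : G.Walk u v) :
    p.bypass.edgeSum φ = p.edgeSum φ := by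
  induction p with
  | nil => rfl
  | @cons u w v h p ih =>
    rw [Walk.bypass]
    split_ifs with hs
    · have hloop := hφ.edgeSum_cons_eq_zero h ((p.bypass_isPath).takeUntil hs)
      have hsplit := congrArg (·.edgeSum φ) (p.bypass.take_spec hs)
      rw [Walk.edgeSum_cons] at hloop
      rw [Walk.edgeSum_append] at hsplit
      rw [Walk.edgeSum_cons, ← ih, ← hsplit, ← add_assoc, hloop, zero_add]
    · rw [Walk.edgeSum_cons, Walk.edgeSum_cons, ih]

lemma edgeSum_eq_zero (hφ : G.IsCycleBalanced φ) {v : V} (c : G.Walk v v) :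
    c.edgeSum φ = 0 := by
  classical
  rw [← hφ.edgeSum_bypass, Walk.eq_nil_iff_nil.mpr (Walk.isPath_iff_nil.mp c.bypass_isPath),
    Walk.edgeSum_nil]

lemma edgeSum_eq (hφ : G.IsCycleBalanced φ) {u v : V} (p q : G.Walk u v) :
    p.edgeSum φ = q.edgeSum φ := by
  have := hφ.edgeSum_eq_zero (p.append q.reverse)
  rwa [Walk.edgeSum_append, Walk.edgeSum_reverse, CharTwo.add_eq_zero] at this

section deleteEdge

variable {e : Sym2 V}

lemma edgeSum_eq_zero_of_notMem_edges (hφ : (G.deleteEdges {e}).IsCycleBalanced φ) {v : V}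
    {c : G.Walk v v} (hc : e ∉ c.edges) : c.edgeSum φ = 0 := by
  simpa using hφ.edgeSum_eq_zero (c.toDeleteEdge e hc)

lemma edgeSum_eq_of_notMem_edges (hφ : (G.deleteEdges {e}).IsCycleBalanced φ) {u v : V}
    {p q : G.Walk u v} (hp : e ∉ p.edges) (hq : e ∉ q.edges) : p.edgeSum φ = q.edgeSum φ := by
  simpa using hφ.edgeSum_eq (p.toDeleteEdge e hp) (q.toDeleteEdge e hq)

end deleteEdge

lemma edgeSum_eq_of_mem_edges {x y : V} (hφ : (G.deleteEdges {s(x, y)}).IsCycleBalanced φ)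
    (hxy : G.Adj x y) {r : G.Walk y x} (hr : s(x, y) ∉ r.edges) {v : V} {c : G.Walk v v}
    (hc : c.IsTrail) (he : s(x, y) ∈ c.edges) :
    c.edgeSum φ = (Walk.cons hxy r).edgeSum φ := by
  obtain ⟨⟨⟨a, b⟩, hab⟩, hd, hde⟩ := List.mem_map.mp he
  obtain ⟨q, t, rfl⟩ := Walk.exists_eq_append_cons_of_mem_darts hd
  change s(a, b) = s(x, y) at hde
  have hnodup := hc.edges_nodup
  simp only [Walk.edges_append, Walk.edges_cons, List.nodup_append, List.nodup_cons] at hnodup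
  have hrest : s(x, y) ∉ (t.append q).edges := by
    rw [Walk.edges_append, List.mem_append, ← hde]
    exact fun h ↦ h.elim hnodup.2.1.1 fun hq ↦ hnodup.2.2 _ hq _ List.mem_cons_self rfl
  have hsplit : (q.append (Walk.cons hab t)).edgeSum φ = φ s(x, y) + (t.append q).edgeSum φ := by
    simp only [Walk.edgeSum_append, Walk.edgeSum_cons, hde]
    abel
  rw [hsplit, Walk.edgeSum_cons]
  congr 1
  rcases Sym2.eq_iff.mp hde with ⟨rfl, rfl⟩ | ⟨rfl, rfl⟩
  · exact hφ.edgeSum_eq_of_notMem_edges hrest hr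
  · rw [← Walk.edgeSum_reverse _ r]
    exact hφ.edgeSum_eq_of_notMem_edges hrest (by rwa [Walk.edges_reverse, List.mem_reverse])

lemma edgeSum_cons_ne_zero {x y : V} (hφ : (G.deleteEdges {s(x, y)}).IsCycleBalanced φ)
    (hG : ¬ G.IsCycleBalanced φ) (hxy : G.Adj x y) {r : G.Walk y x} (hr : s(x, y) ∉ r.edges) :
    (Walk.cons hxy r).edgeSum φ ≠ 0 := by
  simp only [IsCycleBalanced, not_forall] at hG
  obtain ⟨v, c, hc, hφc⟩ := hG
  by_cases he : s(x, y) ∈ c.edges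
  · rwa [← hφ.edgeSum_eq_of_mem_edges hxy hr hc.isTrail he]
  · exact absurd (hφ.edgeSum_eq_zero_of_notMem_edges he) hφc

end IsCycleBalanced

end SimpleGraph

lemma linearIndependent_of_diagonal_pairing {K M ι : Type*} [Field K] [AddCommGroup M] [Module K M]
    [Fintype ι] {c : ι → Module.Dual K M} {a : ι → M} (hdiag : ∀ i, c i (a i) ≠ 0)
    (hoff : ∀ i j, i ≠ j → c i (a j) = 0) : LinearIndependent K c := by
  rw [Fintype.linearIndependent_iff]
  intro g hg i
  have := congrArg (fun f : Module.Dual K M ↦ f (a i)) hg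
  simp only [LinearMap.sum_apply, LinearMap.smul_apply, smul_eq_mul,
    LinearMap.zero_apply] at this
  rw [Finset.sum_eq_single i (fun j _ hji ↦ by rw [hoff j i hji, mul_zero]) (by simp)] at this
  exact (mul_eq_zero.mp this).resolve_right (hdiag i)

theorem card_lt_finrank_of_diagonal_pairing {K M ι : Type*} [Field K] [AddCommGroup M] [Module K M]
    [FiniteDimensional K M] [Fintype ι] {c : ι → Module.Dual K M} {a : ι → M}
    (hdiag : ∀ i, c i (a i) ≠ 0) (hoff : ∀ i j, i ≠ j → c i (a j) = 0) {u : M} (hu : u ≠ 0)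
    (hcu : ∀ i, c i u = 0) : Fintype.card ι < Module.finrank K M := by
  let W := LinearMap.ker (Module.Dual.eval K M u)
  have hW : W ≠ ⊤ := by
    intro h
    refine hu ((Module.forall_dual_apply_eq_zero_iff K u).mp fun f ↦ ?_)
    have hf : f ∈ W := h ▸ Submodule.mem_top
    simpa [W] using hf
  have hli : LinearIndependent K fun i ↦ (⟨c i, hcu i⟩ : W) :=
    .of_comp W.subtype (linearIndependent_of_diagonal_pairing hdiag hoff)
  calc Fintype.card ι ≤ Module.finrank K W := hli.fintype_card_le_finrank
    _ < Module.finrank K (Module.Dual K M) := Submodule.finrank_lt hW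
    _ = Module.finrank K M := Subspace.dual_finrank_eq

theorem stmt11_general {V : Type*} [Fintype V] [DecidableEq V] {k : ℕ} (hk : 1 ≤ k)
    (G : SimpleGraph V) [DecidableRel G.Adj] (ℓ : Sym2 V → Fin k → ZMod 2)
    (P : Set (Fin k × Fin k))
    (hgood : ∀ p ∈ P, ∃ (v : V) (γ : G.Walk v v), γ.IsCycle ∧
        (γ.edges.map (fun e => ℓ e p.1)).sum ≠ (γ.edges.map (fun e => ℓ e p.2)).sum)
    (hmin : ∀ e ∈ G.edgeSet,
        ¬ (∀ p ∈ P, ∃ (v : V) (γ : (G.deleteEdges {e}).Walk v v), γ.IsCycle ∧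
            (γ.edges.map (fun e' => ℓ e' p.1)).sum ≠
            (γ.edges.map (fun e' => ℓ e' p.2)).sum))
    (F : SimpleGraph V) [DecidableRel F.Adj] (hF : F ≤ G)
    (hFspan : ∀ u v : V, F.Reachable u v ↔ G.Reachable u v) :
    (G.edgeFinset \ F.edgeFinset).card < k := by
  set S := G.edgeFinset \ F.edgeFinset
  have hS (e : S) : (e : Sym2 V) ∈ G.edgeSet ∧ (e : Sym2 V) ∉ F.edgeSet := by
    simpa only [mem_edgeFinset] using Finset.mem_sdiff.mp e.2
  let χ (p : Fin k × Fin k) : Module.Dual (ZMod 2) (Fin k → ZMod 2) :=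
    LinearMap.proj (R := ZMod 2) (φ := fun _ ↦ ZMod 2) p.1 - LinearMap.proj p.2
  have hbal (e : S) : ∃ p ∈ P, (G.deleteEdges {(e : Sym2 V)}).IsCycleBalanced (χ p ∘ ℓ) := by
    have := hmin e (hS e).1
    push Not at this
    obtain ⟨p, hp, h⟩ := this
    exact ⟨p, hp, isCycleBalanced_sub_iff.mpr h⟩
  choose p hpP hp using hbal
  choose x y hxy hxye r hrF using fun e : S ↦
    exists_adj_walk_edges_subset_of_le hF (fun u v h ↦ (hFspan u v).mpr h.reachable) (hS e).1
  let C (f : S) : G.Walk (x f) (x f) := Walk.cons (hxy f) (r f)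
  have hr (e f : S) : (e : Sym2 V) ∉ (r f).edges := fun he ↦ (hS e).2 (hrF f e he)
  have hoff (e f : S) (hef : e ≠ f) : χ (p e) ((C f).edgeSum ℓ) = 0 := by
    rw [Walk.map_edgeSum]
    refine (hp e).edgeSum_eq_zero_of_notMem_edges ?_
    simp only [C, Walk.edges_cons, List.mem_cons, hxye f, not_or]
    exact ⟨fun h ↦ hef (Subtype.ext h), hr e f⟩
  have hdiag (e : S) : χ (p e) ((C e).edgeSum ℓ) ≠ 0 := by
    obtain ⟨v, γ, hγ, hne⟩ := hgood (p e) (hpP e)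
    have hpe := hp e
    rw [← hxye e] at hpe
    rw [Walk.map_edgeSum]
    exact hpe.edgeSum_cons_ne_zero (fun h ↦ hne (isCycleBalanced_sub_iff.mp h v γ hγ)) (hxy e)
      (hxye e ▸ hr e e)
  have hone : (fun _ ↦ 1 : Fin k → ZMod 2) ≠ 0 := fun h ↦ one_ne_zero (congrFun h ⟨0, hk⟩)
  have := card_lt_finrank_of_diagonal_pairing hdiag hoff hone fun e ↦ by simp [χ]
  rwa [Module.finrank_fin_fun, Fintype.card_coe] at this

/-- If a `k`-labeled graph `(G, ℓ)` (with `k ≥ 1`) on a finite vertex type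
is `P`-good but deleting any edge destroys `P`-goodness, then for every spanning forest
`F` of `G` the number of non-forest edges of `G` is strictly less than `k`. -/
theorem stmt11 {V : Type*} [Fintype V] [DecidableEq V] {k : ℕ} (hk : 1 ≤ k)
    (G : SimpleGraph V) [DecidableRel G.Adj] (ℓ : Sym2 V → Fin k → ZMod 2)
    (P : Set (Fin k × Fin k))
    (hgood : ∀ p ∈ P, ∃ (v : V) (γ : G.Walk v v), γ.IsCycle ∧
        (γ.edges.map (fun e => ℓ e p.1)).sum ≠ (γ.edges.map (fun e => ℓ e p.2)).sum)
    (hmin : ∀ e ∈ G.edgeSet,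
        ¬ (∀ p ∈ P, ∃ (v : V) (γ : (G.deleteEdges {e}).Walk v v), γ.IsCycle ∧
            (γ.edges.map (fun e' => ℓ e' p.1)).sum ≠
            (γ.edges.map (fun e' => ℓ e' p.2)).sum))
    (F : SimpleGraph V) [DecidableRel F.Adj] (hF : F ≤ G) (hFacyclic : F.IsAcyclic)
    (hFspan : ∀ u v : V, F.Reachable u v ↔ G.Reachable u v) :
    (G.edgeFinset \ F.edgeFinset).card < k :=
  stmt11_general hk G ℓ P hgood hmin F hF hFspan
end

section
/- Let (G, ℓ) be a ZMod 2-labeled graph on a vertex type V, and let G' be the simple graph on V × ZMod 2 in which (u, a) is adjacent to (v, b) if and only if G.Adj u v and b = a + ℓ({u, v}). Then for all vertices u, v : V and every s : ZMod 2, there exists a walk in G from u to v with label sum equal to s if and only if (u, 0) and (v, s) are joined by a walk in G' (i.e., G'.Reachable (u, 0) (v, s)). -/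
open SimpleGraph

/-- The parity double cover of a `ZMod 2`-labeled graph `(G, ℓ)`: the simple graph on
`V × ZMod 2` in which `(u, a)` is adjacent to `(v, b)` iff `G.Adj u v` and
`b = a + ℓ s(u, v)`. -/
def doubleCover {V : Type*} (G : SimpleGraph V) (ℓ : Sym2 V → ZMod 2) :
    SimpleGraph (V × ZMod 2) where
  Adj x y := G.Adj x.1 y.1 ∧ y.2 = x.2 + ℓ s(x.1, y.1)
  symm := by
    constructor
    rintro ⟨u, a⟩ ⟨v, b⟩ ⟨h, hb⟩
    refine ⟨h.symm, ?_⟩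
    simp only at hb ⊢
    rw [Sym2.eq_swap, hb]
    generalize ℓ s(u, v) = c
    clear hb h
    revert a c
    decide
  loopless := by
    constructor
    rintro ⟨u, a⟩ ⟨h, -⟩
    exact G.loopless.irrefl u h

namespace doubleCover

variable {V : Type*} {G : SimpleGraph V} {ℓ : Sym2 V → ZMod 2}

def fst : doubleCover G ℓ →g G where
  toFun := Prod.fst
  map_rel' h := h.1

theorem snd_eq_add_sum_map_fst {x y : V × ZMod 2} (w : (doubleCover G ℓ).Walk x y) :
    y.2 = x.2 + ((w.map fst).edges.map ℓ).sum := by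
  induction w with
  | nil => simp
  | cons h _ ih => simp [fst, ih, h.2, add_assoc]

theorem reachable_add_sum {u v : V} (w : G.Walk u v) (a : ZMod 2) :
    (doubleCover G ℓ).Reachable (u, a) (v, a + (w.edges.map ℓ).sum) := by
  induction w generalizing a with
  | nil => simp
  | @cons u x _ h _ ih =>
    have hstep : (doubleCover G ℓ).Adj (u, a) (x, a + ℓ s(u, x)) := ⟨h, rfl⟩
    simpa [add_assoc] using hstep.reachable.trans (ih _)

end doubleCover

/-- For all `u v : V` and `s : ZMod 2`, there is a walk in `G` from `u` to
`v` with label sum `s` iff `(u, 0)` and `(v, s)` are joined by a walk in the parity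
double cover `G'`. -/
theorem stmt13 {V : Type*} (G : SimpleGraph V) (ℓ : Sym2 V → ZMod 2) :
    ∀ (u v : V) (s : ZMod 2),
      (∃ w : G.Walk u v, (w.edges.map ℓ).sum = s) ↔
        (doubleCover G ℓ).Reachable (u, 0) (v, s) := by
  intro u v s
  constructor
  · rintro ⟨w, rfl⟩
    simpa using doubleCover.reachable_add_sum w 0
  · rintro ⟨w⟩
    exact ⟨w.map doubleCover.fst, (zero_add _).symm.trans (doubleCover.snd_eq_add_sum_map_fst w).symm⟩
end

section
/- Let G be an acyclic simple graph (a forest) and let w : G.Walk v v be a closed walk. Then every edge appears an even number of times in the edge list of w; that is, for every e : Sym2 V, the count of e in w.edges is even. -/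
/-!
Every edge of a forest is a bridge. Deleting a bridge `s(x, y)` splits the vertices into those
reachable from `x` and the rest, with `y` among the rest; a walk changes side exactly when it
traverses the bridge, so the parity of its traversals records whether its endpoints lie on
different sides. A closed walk ends on the side it started on.
-/

open SimpleGraph

namespace SimpleGraph

variable {V : Type*} {G : SimpleGraph V}

theorem Adj.reachable_iff {x a b : V} (h : G.Adj a b) :
    G.Reachable x a ↔ G.Reachable x b :=
  ⟨fun hxa ↦ hxa.trans h.reachable, fun hxb ↦ hxb.trans h.symm.reachable⟩

theorem IsBridge.reachable_deleteEdges_iff_not {x y a b : V}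
    (hb : G.IsBridge s(x, y)) (hab : s(a, b) = s(x, y)) :
    (G.deleteEdges {s(x, y)}).Reachable x a ↔ ¬(G.deleteEdges {s(x, y)}).Reachable x b := by
  have hxy := isBridge_iff.mp hb
  rcases Sym2.eq_iff.mp hab with ⟨rfl, rfl⟩ | ⟨rfl, rfl⟩
  · exact iff_of_true .rfl hxy
  · exact iff_of_false hxy (not_not.mpr .rfl)

theorem Walk.even_count_edges_iff_of_isBridge [DecidableEq V] {x y a b : V}
    (hb : G.IsBridge s(x, y)) (w : G.Walk a b) :
    Even (w.edges.count s(x, y)) ↔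
      ((G.deleteEdges {s(x, y)}).Reachable x a ↔ (G.deleteEdges {s(x, y)}).Reachable x b) := by
  induction w with
  | nil => simp
  | @cons a b c h p ih =>
    rw [edges_cons, List.count_cons]
    by_cases he : s(a, b) = s(x, y)
    · rw [if_pos (beq_iff_eq.mpr he), Nat.even_add_one, ih, hb.reachable_deleteEdges_iff_not he]
      tauto
    · have hab : (G.deleteEdges {s(x, y)}).Adj a b := (deleteEdges_adj ..).mpr ⟨h, he⟩
      rw [if_neg (by simpa using he), add_zero, ih, hab.reachable_iff]

theorem IsBridge.even_count_edges [DecidableEq V] {e : Sym2 V} (hb : G.IsBridge e)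
    {v : V} (w : G.Walk v v) : Even (w.edges.count e) := by
  induction e using Sym2.ind with
  | h x y => exact (w.even_count_edges_iff_of_isBridge hb).mpr .rfl

end SimpleGraph

/-- In an acyclic simple graph (a forest), every edge appears an even
number of times in the edge list of any closed walk. -/
theorem stmt14 {V : Type*} [DecidableEq V] (F : SimpleGraph V) (hF : F.IsAcyclic)
    {v : V} (w : F.Walk v v) (e : Sym2 V) :
    Even (w.edges.count e) := by
  by_cases he : e ∈ F.edgeSet
  · exact (isAcyclic_iff_forall_isBridge.mp hF he).even_count_edges w
  · rw [List.count_eq_zero_of_not_mem fun hw ↦ he (w.edges_subset_edgeSet hw)]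
    exact .zero
end

section
/- Let X be a finite type with exactly k elements, k ≥ 1, and let m ≥ 1. The number of sequences (Φ₁, …, Φ_m) of setoids on X that are finer and finer, i.e., Φ_{i+1} ≤ Φ_i in the refinement order for all i (equivalently, antitone functions from Fin m to the setoid lattice on X), is at most C(m + k − 1, k − 1) · k^(2k), where C denotes the binomial coefficient. -/
/-!
Order `X` linearly and call `x` non-minimal for a setoid `s` when some `y < x` is `s`-related
to `x`. Along a finer-and-finer chain `Φ` the non-minimal sets `N(Φ i)` shrink, so their sizes
form an antitone sequence with values in `[0, k - 1]`, and two sets of the chain with the same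
size coincide. For each `x` record `(y, |N(Φ j)|)`, where `j` is the last index at which `x` is
non-minimal and `y < x` is `Φ j`-related to `x` (or `(x, 0)` if `x` is always minimal): `k²`
choices per point. These data determine the chain: `x` is non-minimal for `Φ i` exactly when
`|N(Φ j)| ≤ |N(Φ i)|`, and `Φ i` is generated by the recorded edges `x — y` of those points,
because every non-minimal element is joined to a smaller one.
-/

namespace Setoid

open Relation

variable {X : Type*} [LinearOrder X]

def nonMinimal (s : Setoid X) : Set X := {x | ∃ y < x, s x y}

lemma nonMinimal_mono : Monotone (nonMinimal : Setoid X → Set X) :=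
  fun _ _ hst _ ⟨y, hyx, hxy⟩ => ⟨y, hyx, hst hxy⟩

lemma nonMinimal_ne_univ [Finite X] [Nonempty X] (s : Setoid X) : s.nonMinimal ≠ Set.univ := by
  obtain ⟨z, hz⟩ := Finite.exists_min (id : X → X)
  intro h
  obtain ⟨y, hyz, -⟩ : z ∈ s.nonMinimal := h ▸ Set.mem_univ z
  exact (hz y).not_gt hyz

lemma eq_eqvGen_of_exists_lt [WellFoundedLT X] {s : Setoid X} {r : X → X → Prop}
    (hrs : ∀ x y, r x y → s x y) (hr : ∀ x ∈ s.nonMinimal, ∃ y < x, r x y) :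
    s = EqvGen.setoid r := by
  refine le_antisymm ?_ (eqvGen_le hrs)
  have eqvGen_of_lt : ∀ x y, y < x → s x y → EqvGen r x y := by
    intro x
    induction x using WellFoundedLT.induction with
    | _ x ih =>
      intro y hyx hxy
      obtain ⟨z, hzx, hxz⟩ := hr x ⟨y, hyx, hxy⟩
      have hzy : s z y := s.trans (s.symm (hrs _ _ hxz)) hxy
      refine EqvGen.trans _ z _ (EqvGen.rel _ _ hxz) ?_
      rcases lt_trichotomy y z with hyz | rfl | hzy'
      · exact ih z hzx y hyz hzy
      · exact EqvGen.refl _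
      · exact EqvGen.symm _ _ (ih y hyx z hzy' (s.symm hzy))
  intro x y hxy
  rcases lt_trichotomy y x with hyx | rfl | hxy'
  · exact eqvGen_of_lt x y hyx hxy
  · exact EqvGen.refl _
  · exact EqvGen.symm _ _ (eqvGen_of_lt y x hxy' (s.symm hxy))

variable {ι : Type*} {Φ : ι → Setoid X}

lemma antitone_ncard_nonMinimal [Preorder ι] [Finite X] (hΦ : Antitone Φ) :
    Antitone fun i => (Φ i).nonMinimal.ncard :=
  fun _ _ hij => Set.ncard_le_ncard (nonMinimal_mono (hΦ hij))

lemma mem_nonMinimal_of_ncard_le [LinearOrder ι] [Finite X] (hΦ : Antitone Φ) {i j : ι} {x : X}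
    (hx : x ∈ (Φ j).nonMinimal) (hji : (Φ j).nonMinimal.ncard ≤ (Φ i).nonMinimal.ncard) :
    x ∈ (Φ i).nonMinimal := by
  rcases le_total i j with hij | hji'
  · exact nonMinimal_mono (hΦ hij) hx
  · rwa [Set.eq_of_subset_of_ncard_le (nonMinimal_mono (hΦ hji')) hji]

def IsCodeAt (Φ : ι → Setoid X) (x : X) (e : X × ℕ) : Prop :=
  (∀ i, e.1 < x → e.2 ≤ (Φ i).nonMinimal.ncard → Φ i x e.1) ∧
    ∀ i, x ∈ (Φ i).nonMinimal → e.1 < x ∧ e.2 ≤ (Φ i).nonMinimal.ncard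

lemma exists_isCodeAt [LinearOrder ι] [Finite ι] [Finite X] (hΦ : Antitone Φ) (x : X) :
    ∃ e, IsCodeAt Φ x e ∧ e.2 < Nat.card X := by
  have : Nonempty X := ⟨x⟩
  by_cases h : ∃ i, x ∈ (Φ i).nonMinimal
  · obtain ⟨j, hj, hlast⟩ :=
      Set.exists_max_image {i | x ∈ (Φ i).nonMinimal} id (Set.toFinite _) h
    obtain ⟨y, hyx, hxy⟩ := id hj
    refine ⟨(y, (Φ j).nonMinimal.ncard), ⟨fun i _ hji => ?_, fun i hi => ⟨hyx, ?_⟩⟩, ?_⟩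
    · exact hΦ (hlast i (mem_nonMinimal_of_ncard_le hΦ hj hji)) hxy
    · exact antitone_ncard_nonMinimal hΦ (hlast i hi)
    · exact Set.ncard_lt_card (nonMinimal_ne_univ _)
  · push Not at h
    exact ⟨(x, 0), ⟨fun _ hxx => absurd hxx (lt_irrefl x), fun i hi => absurd hi (h i)⟩,
      Nat.card_pos⟩

lemma eq_eqvGen_of_isCodeAt [WellFoundedLT X] {e : X → X × ℕ}
    (he : ∀ x, IsCodeAt Φ x (e x)) (i : ι) :
    Φ i = EqvGen.setoid fun x y => y = (e x).1 ∧ y < x ∧ (e x).2 ≤ (Φ i).nonMinimal.ncard :=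
  eq_eqvGen_of_exists_lt (fun x _ ⟨hy, hyx, hle⟩ => hy ▸ (he x).1 i (hy ▸ hyx) hle)
    fun x hx => ⟨(e x).1, ((he x).2 i hx).1, rfl, (he x).2 i hx⟩

lemma eq_of_isCodeAt [WellFoundedLT X] {Ψ : ι → Setoid X} {e : X → X × ℕ}
    (hΦ : ∀ x, IsCodeAt Φ x (e x)) (hΨ : ∀ x, IsCodeAt Ψ x (e x))
    (hN : ∀ i, (Φ i).nonMinimal.ncard = (Ψ i).nonMinimal.ncard) : Φ = Ψ :=
  funext fun i => by rw [eq_eqvGen_of_isCodeAt hΦ i, eq_eqvGen_of_isCodeAt hΨ i, hN i]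

end Setoid

lemma card_antitone_fin_le {α : Type*} [Fintype α] [LinearOrder α] (m : ℕ) :
    Nat.card {f : Fin m → α // Antitone f} ≤ (Fintype.card α + m - 1).choose m := by
  classical
  rw [← Sym.card_sym_eq_choose, ← Nat.card_eq_fintype_card]
  refine Nat.card_le_card_of_injective (fun f => ⟨List.ofFn f.1, by simp⟩) ?_
  rintro ⟨f, hf⟩ ⟨g, hg⟩ hfg
  have hperm : (List.ofFn f).Perm (List.ofFn g) :=
    Multiset.coe_eq_coe.mp (congrArg Subtype.val hfg)
  exact Subtype.ext (List.ofFn_injective (hperm.eq_of_sortedGE hf.sortedGE_ofFn hg.sortedGE_ofFn))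

open Setoid in
theorem stmt15_general {X : Type*} [Fintype X] (k m : ℕ) (hk : Fintype.card X = k)
    (hk1 : 1 ≤ k) :
    Nat.card {Φ : Fin m → Setoid X // Antitone Φ} ≤
      (m + k - 1).choose (k - 1) * k ^ (2 * k) := by
  let : LinearOrder X := LinearOrder.lift' _ (Fintype.equivFin X).injective
  have : Nonempty X := Fintype.card_pos_iff.mp (hk ▸ hk1)
  have hcard : Nat.card X = k := Nat.card_eq_fintype_card.trans hk
  choose code hcode hcode_lt using
    fun Φ : {Φ : Fin m → Setoid X // Antitone Φ} => exists_isCodeAt Φ.2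
  let F : {Φ : Fin m → Setoid X // Antitone Φ} →
      {c : Fin m → Fin k // Antitone c} × (X → X × Fin k) := fun Φ =>
    (⟨fun i => ⟨(Φ.1 i).nonMinimal.ncard, hcard ▸ Set.ncard_lt_card (nonMinimal_ne_univ _)⟩,
      antitone_ncard_nonMinimal Φ.2⟩,
     fun x => ((code Φ x).1, ⟨(code Φ x).2, hcard ▸ hcode_lt Φ x⟩))
  have hF : F.Injective := by
    intro Φ Ψ hFΦΨ
    simp only [F, Prod.ext_iff, Subtype.ext_iff, funext_iff, Fin.ext_iff] at hFΦΨ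
    obtain ⟨hN, hcode_eq⟩ := hFΦΨ
    have hcodeΦΨ : code Φ = code Ψ := funext fun x => Prod.ext_iff.2 (hcode_eq x)
    exact Subtype.ext (eq_of_isCodeAt (hcode Φ) (hcodeΦΨ ▸ hcode Ψ) hN)
  obtain ⟨k, rfl⟩ := Nat.exists_eq_add_of_le' hk1
  calc Nat.card {Φ : Fin m → Setoid X // Antitone Φ}
      ≤ Nat.card {c : Fin m → Fin (k + 1) // Antitone c} * Nat.card (X → X × Fin (k + 1)) :=
        Nat.card_prod _ _ ▸ Nat.card_le_card_of_injective F hF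
    _ ≤ (k + 1 + m - 1).choose m * ((k + 1) * (k + 1)) ^ (k + 1) := by
        gcongr
        · simpa using card_antitone_fin_le (α := Fin (k + 1)) m
        · simp [hk]
    _ = (m + (k + 1) - 1).choose (k + 1 - 1) * (k + 1) ^ (2 * (k + 1)) := by
        rw [pow_mul, sq, Nat.add_sub_cancel, show k + 1 + m - 1 = m + k by omega,
          show m + (k + 1) - 1 = m + k by omega, Nat.choose_symm_add]

/-- Let `X` be a finite type with exactly `k ≥ 1` elements and `m ≥ 1`.
The number of finer-and-finer sequences `(Φ₁, …, Φ_m)` of setoids on `X` (i.e. antitone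
functions from `Fin m` to the lattice of setoids on `X`) is at most
`C(m + k - 1, k - 1) * k ^ (2 * k)`. -/
theorem stmt15 {X : Type*} [Fintype X] (k m : ℕ) (hk : Fintype.card X = k)
    (hk1 : 1 ≤ k) (hm : 1 ≤ m) :
    Nat.card {Φ : Fin m → Setoid X // Antitone Φ} ≤
      (m + k - 1).choose (k - 1) * k ^ (2 * k) :=
  stmt15_general k m hk hk1
end
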